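/- If the system is unsafe, i.e., some initial state s ∈ I has a path (under ReflTransGen R) to an error state in Y₀, then for a finite state space with n = card S there exists i ≤ n with s ∈ Y_i; hence Y_n ∩ I ≠ ∅. -/
import Mathlib


def Pre {S : Type*} (R : S → S → Prop) (Y : Set S) : Set S := {s | ∃ t ∈ Y, R s t}

def iter {S : Type*} (R : S → S → Prop) (Y₀ : Set S) : ℕ → Set S
  | 0 => Y₀
  | i + 1 => Pre R (iter R Y₀ i) ∪ iter R Y₀ i

lemma iter_mono {S : Type*} (R : S → S → Prop) (Y₀ : Set S) :
    Monotone (iter R Y₀) := by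
  apply monotone_nat_of_le_succ
  intro i
  exact Set.subset_union_right

lemma iter_stab {S : Type*} (R : S → S → Prop) (Y₀ : Set S) (i : ℕ)
    (h : iter R Y₀ (i + 1) = iter R Y₀ i) :
    ∀ m, i ≤ m → iter R Y₀ m = iter R Y₀ i := by
  intro m hm
  induction m with
  | zero =>
    have : i = 0 := by omega
    rw [this]
  | succ k ih =>
    rcases Nat.lt_or_ge i (k + 1) with hlt | hge
    · have hk : i ≤ k := by omega
      have := ih hk
      show Pre R (iter R Y₀ k) ∪ iter R Y₀ k = _
      rw [this]; exact h
    · have : i = k + 1 := by omega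
      rw [this]

lemma iter_reach {S : Type*} (R : S → S → Prop) (Y₀ : Set S) {s t : S}
    (ht : t ∈ Y₀) (hr : Relation.ReflTransGen R s t) :
    ∃ k, s ∈ iter R Y₀ k := by
  induction hr using Relation.ReflTransGen.head_induction_on with
  | refl => exact ⟨0, ht⟩
  | head hab _ ih =>
    obtain ⟨k, hk⟩ := ih
    exact ⟨k + 1, Or.inl ⟨_, hk, hab⟩⟩

lemma iter_fix {S : Type*} [Fintype S] (R : S → S → Prop) (Y₀ : Set S) :
    ∃ i ≤ Fintype.card S, iter R Y₀ (i + 1) = iter R Y₀ i := by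
  by_contra hc
  push_neg at hc
  have key : ∀ i, i ≤ Fintype.card S + 1 → i ≤ (iter R Y₀ i).ncard := by
    intro i
    induction i with
    | zero => intro _; exact Nat.zero_le _
    | succ k ih =>
      intro hk
      have hk' : k ≤ Fintype.card S := by omega
      have hne := hc k hk'
      have hss : iter R Y₀ k ⊂ iter R Y₀ (k + 1) :=
        ⟨Set.subset_union_right, fun hsub => hne (le_antisymm hsub Set.subset_union_right)⟩
      have := Set.ncard_lt_ncard hss (Set.toFinite _)
      have := ih (by omega)
      omega
  have h1 := key (Fintype.card S + 1) le_rfl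
  have h2 : (iter R Y₀ (Fintype.card S + 1)).ncard ≤ Fintype.card S := by
    calc (iter R Y₀ (Fintype.card S + 1)).ncard ≤ (Set.univ : Set S).ncard :=
          Set.ncard_le_ncard (Set.subset_univ _) Set.finite_univ
      _ = Fintype.card S := by rw [Set.ncard_univ, Nat.card_eq_fintype_card]
  omega

theorem stmt8 {S : Type*} [Fintype S] (n : ℕ) (hn : Fintype.card S = n)
    (R : S → S → Prop) (I Y₀ : Set S) (s : S) (hs : s ∈ I)
    (h : ∃ t ∈ Y₀, Relation.ReflTransGen R s t) :
    (∃ i ≤ n, s ∈ iter R Y₀ i) ∧ iter R Y₀ n ∩ I ≠ ∅ := by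
  obtain ⟨t, ht, hr⟩ := h
  obtain ⟨k, hk⟩ := iter_reach R Y₀ ht hr
  obtain ⟨i, hi, hfix⟩ := iter_fix R Y₀
  rw [hn] at hi
  have hsn : s ∈ iter R Y₀ n := by
    rcases le_or_gt k n with hkn | hnk
    · exact iter_mono R Y₀ hkn hk
    · have hik : i ≤ k := by omega
      have := iter_stab R Y₀ i hfix k hik
      rw [this] at hk
      exact iter_mono R Y₀ hi hk
  exact ⟨⟨n, le_rfl, hsn⟩, fun hemp => Set.eq_empty_iff_forall_notMem.mp hemp s ⟨hsn, hs⟩⟩
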